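/- Let a, b ∈ ℝ³ with ‖a‖ ≤ 1 and ‖b‖ ≤ 1, and let ρ0 = (1/2)(I + a₁σ_x + a₂σ_y + a₃σ_z) and ρ1 = (1/2)(I + b₁σ_x + b₂σ_y + b₃σ_z) be the corresponding 2×2 density matrices, where σ_x = [[0,1],[1,0]], σ_y = [[0,−i],[i,0]], σ_z = [[1,0],[0,−1]] are the Pauli matrices. Then the quantum fidelity satisfies tr √(ρ1^{1/2} ρ0 ρ1^{1/2}) = (1/√2) · √( 1 + a·b + √(1 − ‖a‖²) · √(1 − ‖b‖²) ), where a·b is the Euclidean dot product. -/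

import Mathlib

open Matrix
open scoped ComplexOrder

namespace Matrix.PosSemidef

variable {n : Type*} [Fintype n] [DecidableEq n] {𝕜 : Type*} [RCLike 𝕜]
  {A : Matrix n n 𝕜} (hA : PosSemidef A)

/-- The square root of a positive semidefinite matrix (as in the older Mathlib). -/
noncomputable def sqrt : Matrix n n 𝕜 :=
  hA.1.eigenvectorUnitary.1 * diagonal ((↑) ∘ (√·) ∘ hA.1.eigenvalues) *
  (star hA.1.eigenvectorUnitary : Matrix n n 𝕜)

lemma posSemidef_sqrt : PosSemidef hA.sqrt := by
  unfold sqrt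
  have hd : PosSemidef (diagonal (((↑) ∘ (√·) ∘ hA.1.eigenvalues : n → 𝕜))) := by
    refine posSemidef_diagonal_iff.mpr fun i ↦ ?_
    rw [Function.comp_apply, RCLike.nonneg_iff]
    constructor
    · simp only [Function.comp_apply, RCLike.ofReal_re]; exact Real.sqrt_nonneg _
    · simp only [Function.comp_apply, RCLike.ofReal_im]
  exact hd.mul_mul_conjTranspose_same _

end Matrix.PosSemidef

/-- The sandwiched matrix `ρ1^{1/2} ρ0 ρ1^{1/2}` is positive semidefinite. -/
noncomputable def sandwichPosSemidef {D : ℕ} {ρ0 ρ1 : Matrix (Fin D) (Fin D) ℂ}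
    (hρ0 : ρ0.PosSemidef) (hρ1 : ρ1.PosSemidef) :
    (hρ1.sqrt * ρ0 * hρ1.sqrt).PosSemidef := by
  have h := hρ0.mul_mul_conjTranspose_same hρ1.sqrt
  rwa [hρ1.posSemidef_sqrt.isHermitian.eq] at h

/-! A `2 × 2` positive semidefinite matrix `M` with eigenvalues `λ, μ ≥ 0` has
`tr √M = √λ + √μ = √(tr M + 2 √(det M))`. For `M = √ρ1 ρ0 √ρ1` one has
`tr M = tr (ρ0 ρ1) = (1 + a·b) / 2` and `det M = det ρ0 · det ρ1 = (1 - ‖a‖²)(1 - ‖b‖²) / 16`,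
and `√(det M) = √(det ρ0) √(det ρ1)` since `det ρ0 ≥ 0` for `ρ0 ⪰ 0`. -/

theorem Real.sqrt_add_sqrt {x y : ℝ} (hx : 0 ≤ x) (hy : 0 ≤ y) :
    √x + √y = √(x + y + 2 * √(x * y)) := by
  rw [← Real.sqrt_sq (by positivity : 0 ≤ √x + √y), Real.sqrt_mul hx, add_sq,
    Real.sq_sqrt hx, Real.sq_sqrt hy]
  ring_nf

namespace Matrix.PosSemidef

variable {n : Type*} [Fintype n] [DecidableEq n] {𝕜 : Type*} [RCLike 𝕜] {A B : Matrix n n 𝕜}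

theorem sqrt_mul_sqrt (hA : A.PosSemidef) : hA.sqrt * hA.sqrt = A := by
  conv_rhs => rw [hA.1.spectral_theorem, Unitary.conjStarAlgAut_apply]
  rw [sqrt]
  simp only [Matrix.mul_assoc]
  rw [← Matrix.mul_assoc (star _ : Matrix n n 𝕜),
    mem_unitaryGroup_iff'.mp hA.1.eigenvectorUnitary.2, Matrix.one_mul,
    ← Matrix.mul_assoc (diagonal _), diagonal_mul_diagonal]
  congr 3
  funext i
  simp only [Function.comp_apply, ← RCLike.ofReal_mul, Real.mul_self_sqrt (hA.eigenvalues_nonneg i)]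

theorem trace_sqrt (hA : A.PosSemidef) : hA.sqrt.trace = ∑ i, (√(hA.1.eigenvalues i) : 𝕜) := by
  rw [sqrt, trace_mul_cycle, mem_unitaryGroup_iff'.mp hA.1.eigenvectorUnitary.2, Matrix.one_mul,
    trace_diagonal]
  rfl

theorem trace_sqrt_mul_mul_sqrt (hB : B.PosSemidef) :
    (hB.sqrt * A * hB.sqrt).trace = (B * A).trace := by
  rw [trace_mul_cycle, hB.sqrt_mul_sqrt]

theorem det_sqrt_mul_mul_sqrt (hB : B.PosSemidef) :
    (hB.sqrt * A * hB.sqrt).det = A.det * B.det := by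
  rw [det_mul, det_mul, mul_right_comm, ← det_mul, hB.sqrt_mul_sqrt, mul_comm]

end Matrix.PosSemidef

theorem Matrix.PosSemidef.re_trace_sqrt_fin_two {𝕜 : Type*} [RCLike 𝕜]
    {A : Matrix (Fin 2) (Fin 2) 𝕜} (hA : A.PosSemidef) :
    RCLike.re hA.sqrt.trace = √(RCLike.re A.trace + 2 * √(RCLike.re A.det)) := by
  rw [hA.trace_sqrt, hA.1.trace_eq_sum_eigenvalues, hA.1.det_eq_prod_eigenvalues]
  simp only [Fin.sum_univ_two, Fin.prod_univ_two, ← RCLike.ofReal_add, ← RCLike.ofReal_mul,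
    RCLike.ofReal_re]
  exact Real.sqrt_add_sqrt (hA.eigenvalues_nonneg 0) (hA.eigenvalues_nonneg 1)

noncomputable def blochMatrix (v : Fin 3 → ℝ) : Matrix (Fin 2) (Fin 2) ℂ :=
  (1 / 2 : ℂ) • (1 + (v 0 : ℂ) • !![0, 1; 1, 0] + (v 1 : ℂ) • !![0, -Complex.I; Complex.I, 0]
    + (v 2 : ℂ) • !![1, 0; 0, -1])

theorem blochMatrix_eq (v : Fin 3 → ℝ) :
    blochMatrix v = (1 / 2 : ℂ) •
      !![1 + (v 2 : ℂ), v 0 - v 1 * Complex.I; v 0 + v 1 * Complex.I, 1 - v 2] := by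
  ext i j
  fin_cases i <;> fin_cases j <;> simp [blochMatrix] <;> ring

theorem trace_blochMatrix_mul (a b : Fin 3 → ℝ) :
    (blochMatrix a * blochMatrix b).trace = ((1 + ∑ i, a i * b i) / 2 : ℝ) := by
  rw [blochMatrix_eq, blochMatrix_eq, smul_mul_smul_comm, trace_smul, mul_fin_two,
    trace_fin_two_of]
  push_cast [Fin.sum_univ_three]
  linear_combination (-(a 1 * b 1) / 2 : ℂ) * Complex.I_sq

theorem det_blochMatrix (v : Fin 3 → ℝ) :
    (blochMatrix v).det = ((1 - ∑ i, v i ^ 2) / 4 : ℝ) := by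
  rw [blochMatrix_eq, det_smul, det_fin_two_of]
  push_cast [Fintype.card_fin, Fin.sum_univ_three]
  linear_combination (v 1 ^ 2 / 4 : ℂ) * Complex.I_sq

theorem fidelity_two_dimensional_general (a b : Fin 3 → ℝ)
    (ρ0 ρ1 : Matrix (Fin 2) (Fin 2) ℂ)
    (hρ0def : ρ0 = (1 / 2 : ℂ) •
      (1 + (a 0 : ℂ) • !![0, 1; 1, 0] + (a 1 : ℂ) • !![0, -Complex.I; Complex.I, 0]
         + (a 2 : ℂ) • !![1, 0; 0, -1]))
    (hρ1def : ρ1 = (1 / 2 : ℂ) •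
      (1 + (b 0 : ℂ) • !![0, 1; 1, 0] + (b 1 : ℂ) • !![0, -Complex.I; Complex.I, 0]
         + (b 2 : ℂ) • !![1, 0; 0, -1]))
    (hρ0 : ρ0.PosSemidef) (hρ1 : ρ1.PosSemidef) :
    ((sandwichPosSemidef hρ0 hρ1).sqrt).trace.re
      = (1 / Real.sqrt 2) *
        Real.sqrt (1 + (∑ i, a i * b i) +
          Real.sqrt (1 - ∑ i, (a i) ^ 2) * Real.sqrt (1 - ∑ i, (b i) ^ 2)) := by
  obtain rfl : ρ0 = blochMatrix a := hρ0def
  obtain rfl : ρ1 = blochMatrix b := hρ1def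
  have hp : 0 ≤ (1 - ∑ i, a i ^ 2) / 4 := by
    simpa only [det_blochMatrix, Complex.zero_le_real] using hρ0.det_nonneg
  have htrace : (hρ1.sqrt * blochMatrix a * hρ1.sqrt).trace.re = (1 + ∑ i, a i * b i) / 2 := by
    rw [hρ1.trace_sqrt_mul_mul_sqrt, trace_mul_comm, trace_blochMatrix_mul, Complex.ofReal_re]
  have hdet : (hρ1.sqrt * blochMatrix a * hρ1.sqrt).det.re
      = (1 - ∑ i, a i ^ 2) / 4 * ((1 - ∑ i, b i ^ 2) / 4) := by
    rw [hρ1.det_sqrt_mul_mul_sqrt, det_blochMatrix, det_blochMatrix, ← Complex.ofReal_mul,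
      Complex.ofReal_re]
  rw [← RCLike.re_to_complex, PosSemidef.re_trace_sqrt_fin_two, RCLike.re_to_complex,
    RCLike.re_to_complex, htrace, hdet, Real.sqrt_mul hp, Real.sqrt_div' _ zero_le_four,
    Real.sqrt_div' _ zero_le_four, show √(4 : ℝ) = 2 by norm_num]
  calc _ = √((1 + ∑ i, a i * b i + √(1 - ∑ i, a i ^ 2) * √(1 - ∑ i, b i ^ 2)) / 2) := by
        congr 1; ring
    _ = _ := by rw [Real.sqrt_div' _ zero_le_two, one_div, inv_mul_eq_div]

/-- The quantum fidelity of two `2×2` density matrices in Bloch-vector form: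
`F(ρ0, ρ1) = (1/√2) √(1 + a·b + √(1 − ‖a‖²) √(1 − ‖b‖²))`. -/
theorem fidelity_two_dimensional (a b : Fin 3 → ℝ)
    (ha : ∑ i, (a i) ^ 2 ≤ 1) (hb : ∑ i, (b i) ^ 2 ≤ 1)
    (ρ0 ρ1 : Matrix (Fin 2) (Fin 2) ℂ)
    (hρ0def : ρ0 = (1 / 2 : ℂ) •
      (1 + (a 0 : ℂ) • !![0, 1; 1, 0] + (a 1 : ℂ) • !![0, -Complex.I; Complex.I, 0]
         + (a 2 : ℂ) • !![1, 0; 0, -1]))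
    (hρ1def : ρ1 = (1 / 2 : ℂ) •
      (1 + (b 0 : ℂ) • !![0, 1; 1, 0] + (b 1 : ℂ) • !![0, -Complex.I; Complex.I, 0]
         + (b 2 : ℂ) • !![1, 0; 0, -1]))
    (hρ0 : ρ0.PosSemidef) (hρ1 : ρ1.PosSemidef) :
    ((sandwichPosSemidef hρ0 hρ1).sqrt).trace.re
      = (1 / Real.sqrt 2) *
        Real.sqrt (1 + (∑ i, a i * b i) +
          Real.sqrt (1 - ∑ i, (a i) ^ 2) * Real.sqrt (1 - ∑ i, (b i) ^ 2)) :=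
  fidelity_two_dimensional_general a b ρ0 ρ1 hρ0def hρ1def hρ0 hρ1
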